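/- If D' ⊂ D where D' is an orbit of G_{v1}(k) and D is an orbit of G_{v0}(k) on P^1(F), then D is also an orbit of G_e(k) = ⟨G_{v0}(k), G_{v1}(k)⟩. -/

import Mathlib

open Matrix Pointwise
open scoped OnePoint

noncomputable section

/-- `ϖ` is a uniformizer of the nonarchimedean field `F`. -/
def IsUniformizer (F : Type*) [NormedField F] (ϖ : F) : Prop :=
  ϖ ≠ 0 ∧ ‖ϖ‖ < 1 ∧ ∀ x : F, ‖x‖ < 1 → ‖x‖ ≤ ‖ϖ‖

/-- The principal congruence subgroup `G_{v₀}(k)` of level `k`: matrices in `GL₂(𝒪)`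
congruent to the identity modulo `ϖ^k` (entrywise, each entry of `g - 1` lies in `ϖ^k 𝒪`,
i.e. has norm at most `‖ϖ‖^k`). -/
def Gv0 (F : Type*) [NormedField F] (ϖ : F) (k : ℕ) : Set (GL (Fin 2) F) :=
  {g | ‖(g : Matrix (Fin 2) (Fin 2) F) 0 0 - 1‖ ≤ ‖ϖ‖ ^ k ∧
       ‖(g : Matrix (Fin 2) (Fin 2) F) 0 1‖ ≤ ‖ϖ‖ ^ k ∧
       ‖(g : Matrix (Fin 2) (Fin 2) F) 1 0‖ ≤ ‖ϖ‖ ^ k ∧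
       ‖(g : Matrix (Fin 2) (Fin 2) F) 1 1 - 1‖ ≤ ‖ϖ‖ ^ k}

/-- The diagonal matrix `diag(ϖ, 1)` as an element of `GL₂(F)`. -/
def dmat (F : Type*) [Field F] (ϖ : F) (h : ϖ ≠ 0) : GL (Fin 2) F :=
  Matrix.GeneralLinearGroup.mkOfDetNeZero !![ϖ, 0; 0, 1]
    (by simpa [Matrix.det_fin_two_of] using h)

/-- `G_{v₁}(k) = diag(ϖ,1) · G_{v₀}(k) · diag(ϖ,1)⁻¹`. -/
def Gv1 (F : Type*) [NormedField F] (ϖ : F) (h : ϖ ≠ 0) (k : ℕ) : Set (GL (Fin 2) F) :=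
  (fun g => dmat F ϖ h * g * (dmat F ϖ h)⁻¹) '' Gv0 F ϖ k

/-- The explicit set `H` of matrices `[[1+ϖ^k a, ϖ^k b],[ϖ^{k-1} c, 1+ϖ^k d]]`, `a,b,c,d ∈ 𝒪`;
this is the edge group `G_e(k)`. -/
def Ge (F : Type*) [NormedField F] (ϖ : F) (k : ℕ) : Set (GL (Fin 2) F) :=
  {g | ‖(g : Matrix (Fin 2) (Fin 2) F) 0 0 - 1‖ ≤ ‖ϖ‖ ^ k ∧
       ‖(g : Matrix (Fin 2) (Fin 2) F) 0 1‖ ≤ ‖ϖ‖ ^ k ∧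
       ‖(g : Matrix (Fin 2) (Fin 2) F) 1 0‖ ≤ ‖ϖ‖ ^ (k - 1) ∧
       ‖(g : Matrix (Fin 2) (Fin 2) F) 1 1 - 1‖ ≤ ‖ϖ‖ ^ k}

/-- The explicit description of `G_{v₁}(k)`: matrices
`[[1+ϖ^k a, ϖ^{k+1} b],[ϖ^{k-1} c, 1+ϖ^k d]]` with `a,b,c,d ∈ 𝒪`. -/
def Gv1ex (F : Type*) [NormedField F] (ϖ : F) (k : ℕ) : Set (GL (Fin 2) F) :=
  {g | ‖(g : Matrix (Fin 2) (Fin 2) F) 0 0 - 1‖ ≤ ‖ϖ‖ ^ k ∧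
       ‖(g : Matrix (Fin 2) (Fin 2) F) 0 1‖ ≤ ‖ϖ‖ ^ (k + 1) ∧
       ‖(g : Matrix (Fin 2) (Fin 2) F) 1 0‖ ≤ ‖ϖ‖ ^ (k - 1) ∧
       ‖(g : Matrix (Fin 2) (Fin 2) F) 1 1 - 1‖ ≤ ‖ϖ‖ ^ k}

open scoped Classical in
/-- The right Möbius action of `g = [[a,b],[c,d]]` on `ℙ¹(F) = F ∪ {∞}` (here modelled as
`Option F`, with `none = ∞`): `z·g = (az+c)/(bz+d)`, `∞·g = a/b`, with value `∞` when the
denominator vanishes. -/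
def moeb (F : Type*) [Field F] (g : Matrix (Fin 2) (Fin 2) F) : Option F → Option F
  | Option.some z => if g 0 1 * z + g 1 1 = 0 then Option.none
      else Option.some ((g 0 0 * z + g 1 0) / (g 0 1 * z + g 1 1))
  | Option.none => if g 0 1 = 0 then Option.none else Option.some (g 0 0 / g 0 1)

/-- The orbit of `z ∈ ℙ¹(F)` under a set `S` of elements of `GL₂(F)` acting on the right by
Möbius transformations. -/
def orb (F : Type*) [Field F] (S : Set (GL (Fin 2) F)) (z : Option F) : Set (Option F) :=
  {w | ∃ g ∈ S, moeb F (g : Matrix (Fin 2) (Fin 2) F) z = w}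

/-- `D` is an orbit of `S` on `ℙ¹(F)`. -/
def IsOrbit (F : Type*) [Field F] (S : Set (GL (Fin 2) F)) (D : Set (Option F)) : Prop :=
  ∃ z, D = orb F S z

/-- The region `B_w(∞, |ϖ|) = {w ∈ ℙ¹(F) : |1/w| ≤ |ϖ|} = {|w| ≥ |ϖ|⁻¹} ∪ {∞}`. -/
def regionInfty (F : Type*) [NormedField F] (ϖ : F) : Set (Option F) :=
  {w | w = Option.none ∨ ∃ z : F, w = Option.some z ∧ ‖ϖ‖⁻¹ ≤ ‖z‖}

/-- The coordinate `1/w` on `ℙ¹(F)`, with `1/∞ = 0`. -/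
def invc (F : Type*) [Field F] : Option F → F
  | Option.none => 0
  | Option.some z => z⁻¹

/-- The residue field of `F` has cardinality `q`: there are exactly `q` classes in
`𝒪/(ϖ)`, witnessed by a set of representatives. -/
def ResidueCard (F : Type*) [NormedField F] (ϖ : F) (q : ℕ) : Prop :=
  ∃ s : Finset F, s.card = q ∧ (∀ x ∈ s, ‖x‖ ≤ 1) ∧
    ∀ x : F, ‖x‖ ≤ 1 → ∃! y, y ∈ s ∧ ‖x - y‖ ≤ ‖ϖ‖

/-- The conjugate `h S h⁻¹` of a set of matrices. -/
def conjSet (F : Type*) [Field F] (h : GL (Fin 2) F) (S : Set (GL (Fin 2) F)) :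
    Set (GL (Fin 2) F) :=
  (fun g => h * g * h⁻¹) '' S

/-- The matrix `g_α = [[1,0],[α,ϖ]]` as an element of `GL₂(F)`. -/
def galpha (F : Type*) [Field F] (ϖ α : F) (h : ϖ ≠ 0) : GL (Fin 2) F :=
  Matrix.GeneralLinearGroup.mkOfDetNeZero !![1, 0; α, ϖ]
    (by simpa [Matrix.det_fin_two_of] using h)

/-- The diagonal matrix `diag(1, ϖ^n)` as an element of `GL₂(F)`. -/
def dmatN (F : Type*) [Field F] (ϖ : F) (h : ϖ ≠ 0) (n : ℕ) : GL (Fin 2) F :=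
  Matrix.GeneralLinearGroup.mkOfDetNeZero !![1, 0; 0, ϖ ^ n]
    (by simpa [Matrix.det_fin_two_of] using pow_ne_zero n h)

/-!
On the region `|1/w| ≤ |ϖ|` use the coordinate `u = 1/w`. A matrix `[[a, b], [c, d]]` of
`G_e(k)` acts there by `u ↦ (d u + b) / (c u + a)`, and since it is congruent to the identity
(with `|c| ≤ |ϖ|^(k-1)` compensated by `|u| ≤ |ϖ|`) it moves `u` by at most `|ϖ|^k`; the
unipotent matrices `[[1, t], [0, 1]]` of `G_{v₀}(k)` translate `u` by any `|t| ≤ |ϖ|^k`. Hence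
there the `G_{v₀}(k)`-orbits are the discs of radius `|ϖ|^k` in `u`, and they are stable under
the group `G_e(k) ⊇ ⟨G_{v₀}(k), G_{v₁}(k)⟩`.

Outside the region, `w` is integral, and by the same estimate in the coordinate `w` a
`G_{v₀}(k)`-orbit has diameter at most `|ϖ|^k`. But every `G_{v₁}(k)`-orbit contains `w` and
`w + ϖ^(k-1)`, the image under the conjugate of `[[1, 0], [ϖ^k, 1]]`, so it lies in no
`G_{v₀}(k)`-orbit there.
-/

namespace IsUltrametricDist

section Group

variable {E : Type*} [SeminormedAddCommGroup E] [IsUltrametricDist E] {x y : E} {r : ℝ}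

lemma norm_add_le_of_le (hx : ‖x‖ ≤ r) (hy : ‖y‖ ≤ r) : ‖x + y‖ ≤ r :=
  (norm_add_le_max x y).trans (max_le hx hy)

lemma norm_sub_le_of_le (hx : ‖x‖ ≤ r) (hy : ‖y‖ ≤ r) : ‖x - y‖ ≤ r := by
  simpa only [sub_eq_add_neg] using norm_add_le_of_le hx ((norm_neg y).trans_le hy)

end Group

section Ring

variable {R : Type*} [SeminormedRing R] [NormOneClass R] [IsUltrametricDist R] {x : R}

lemma norm_le_one_of_norm_sub_one_le_one (hx : ‖x - 1‖ ≤ 1) : ‖x‖ ≤ 1 := by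
  simpa using norm_add_le_of_le hx norm_one.le

lemma norm_eq_one_of_norm_sub_one_lt_one (hx : ‖x - 1‖ < 1) : ‖x‖ = 1 := by
  have := norm_add_eq_max_of_norm_ne_norm (hx.trans_eq norm_one.symm).ne'
  rwa [add_sub_cancel, norm_one, max_eq_left hx.le] at this

end Ring

end IsUltrametricDist

open IsUltrametricDist

lemma norm_mul_le_of_norm_le_one_left {R : Type*} [SeminormedRing R] {x y : R} {r : ℝ}
    (hx : ‖x‖ ≤ 1) (hy : ‖y‖ ≤ r) : ‖x * y‖ ≤ r :=
  (norm_mul_le_of_le hx hy).trans_eq (one_mul r)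

lemma norm_mul_le_of_norm_le_one_right {R : Type*} [SeminormedRing R] {x y : R} {r : ℝ}
    (hx : ‖x‖ ≤ r) (hy : ‖y‖ ≤ 1) : ‖x * y‖ ≤ r :=
  (norm_mul_le_of_le hx hy).trans_eq (mul_one r)

section FractionalLinear

variable {F : Type*} [NormedField F] [IsUltrametricDist F] {α β γ δ x : F} {r : ℝ}

lemma norm_mul_add_eq_one (hr : r < 1) (hα : ‖α - 1‖ ≤ r) (hγx : ‖γ * x‖ ≤ r) :
    ‖γ * x + α‖ = 1 := by
  refine norm_eq_one_of_norm_sub_one_lt_one (lt_of_le_of_lt ?_ hr)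
  rw [add_sub_assoc]
  exact norm_add_le_of_le hγx hα

lemma norm_mul_add_div_mul_add_sub_le (hr : r < 1) (hα : ‖α - 1‖ ≤ r) (hβ : ‖β‖ ≤ r)
    (hγx : ‖γ * x‖ ≤ r) (hδ : ‖δ - 1‖ ≤ r) (hx : ‖x‖ ≤ 1) :
    ‖(δ * x + β) / (γ * x + α) - x‖ ≤ r := by
  have hden := norm_mul_add_eq_one hr hα hγx
  have hden0 : γ * x + α ≠ 0 := norm_ne_zero_iff.1 (hden.trans_ne one_ne_zero)
  have e : (δ * x + β) / (γ * x + α) - x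
      = (β + (δ - 1) * x - (α - 1) * x - γ * x * x) / (γ * x + α) := by
    rw [eq_div_iff hden0, sub_mul, div_mul_cancel₀ _ hden0]
    ring
  rw [e, norm_div, hden, div_one]
  exact norm_sub_le_of_le (norm_sub_le_of_le (norm_add_le_of_le hβ
    (norm_mul_le_of_norm_le_one_right hδ hx)) (norm_mul_le_of_norm_le_one_right hα hx))
    (norm_mul_le_of_norm_le_one_right hγx hx)

end FractionalLinear

section Unipotent

variable {F : Type*} [Field F]

def upperUnipotent (t : F) : GL (Fin 2) F :=
  Matrix.GeneralLinearGroup.mkOfDetNeZero !![1, t; 0, 1] (by simp [Matrix.det_fin_two_of])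

def lowerUnipotent (t : F) : GL (Fin 2) F :=
  Matrix.GeneralLinearGroup.mkOfDetNeZero !![1, 0; t, 1] (by simp [Matrix.det_fin_two_of])

lemma coe_upperUnipotent (t : F) :
    ((upperUnipotent t : GL (Fin 2) F) : Matrix (Fin 2) (Fin 2) F) = !![1, t; 0, 1] := rfl

lemma coe_lowerUnipotent (t : F) :
    ((lowerUnipotent t : GL (Fin 2) F) : Matrix (Fin 2) (Fin 2) F) = !![1, 0; t, 1] := rfl

lemma coe_dmat_mul_mul_inv {ϖ : F} (hϖ : ϖ ≠ 0) (g : GL (Fin 2) F) :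
    ((dmat F ϖ hϖ * g * (dmat F ϖ hϖ)⁻¹ : GL (Fin 2) F) : Matrix (Fin 2) (Fin 2) F) =
      !![(g : Matrix (Fin 2) (Fin 2) F) 0 0, ϖ * (g : Matrix (Fin 2) (Fin 2) F) 0 1;
        ϖ⁻¹ * (g : Matrix (Fin 2) (Fin 2) F) 1 0, (g : Matrix (Fin 2) (Fin 2) F) 1 1] := by
  have hinv : (((dmat F ϖ hϖ)⁻¹ : GL (Fin 2) F) : Matrix (Fin 2) (Fin 2) F) =
      !![ϖ⁻¹, 0; 0, 1] := by
    rw [Matrix.GeneralLinearGroup.coe_inv, Matrix.inv_eq_left_inv]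
    simp [dmat, hϖ, Matrix.one_fin_two]
  rw [Units.val_mul, Units.val_mul, hinv, dmat, Matrix.GeneralLinearGroup.val_mkOfDetNeZero,
    Matrix.eta_fin_two (g : Matrix (Fin 2) (Fin 2) F)]
  simp [mul_comm _ ϖ⁻¹, hϖ]

lemma dmat_mul_lowerUnipotent_mul_inv {ϖ : F} (hϖ : ϖ ≠ 0) (t : F) :
    dmat F ϖ hϖ * lowerUnipotent t * (dmat F ϖ hϖ)⁻¹ = lowerUnipotent (ϖ⁻¹ * t) := by
  ext1
  rw [coe_dmat_mul_mul_inv, coe_lowerUnipotent, coe_lowerUnipotent]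
  simp

end Unipotent

section CongruenceSubgroups

variable {F : Type*} [NormedField F] {ϖ : F} {k : ℕ}

lemma upperUnipotent_mem_Gv0 {t : F} (ht : ‖t‖ ≤ ‖ϖ‖ ^ k) : upperUnipotent t ∈ Gv0 F ϖ k := by
  refine ⟨?_, ?_, ?_, ?_⟩ <;> simp [coe_upperUnipotent, ht]

lemma lowerUnipotent_mem_Gv0 {t : F} (ht : ‖t‖ ≤ ‖ϖ‖ ^ k) : lowerUnipotent t ∈ Gv0 F ϖ k := by
  refine ⟨?_, ?_, ?_, ?_⟩ <;> simp [coe_lowerUnipotent, ht]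

lemma one_mem_Ge : (1 : GL (Fin 2) F) ∈ Ge F ϖ k := by
  refine ⟨?_, ?_, ?_, ?_⟩ <;> simp

lemma Gv0_subset_Ge (hϖ : ‖ϖ‖ ≤ 1) : Gv0 F ϖ k ⊆ Ge F ϖ k :=
  fun _ ⟨ha, hb, hc, hd⟩ ↦
    ⟨ha, hb, hc.trans (pow_le_pow_of_le_one (norm_nonneg _) hϖ (Nat.sub_le k 1)), hd⟩

lemma Gv1_subset_Ge (hϖ₀ : ϖ ≠ 0) (hϖ : ‖ϖ‖ ≤ 1) (hk : 1 ≤ k) :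
    Gv1 F ϖ hϖ₀ k ⊆ Ge F ϖ k := by
  rintro _ ⟨g, ⟨ha, hb, hc, hd⟩, rfl⟩
  simp only [Ge, Set.mem_ofPred_eq, coe_dmat_mul_mul_inv, Matrix.of_apply, Matrix.cons_val',
    Matrix.cons_val_zero, Matrix.cons_val_one, Matrix.empty_val', Matrix.cons_val_fin_one]
  refine ⟨ha, norm_mul_le_of_norm_le_one_left hϖ hb,
    (norm_mul_le_of_le (norm_inv ϖ).le hc).trans_eq ?_, hd⟩
  rw [← pow_sub_one_mul (by omega : k ≠ 0), mul_comm,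
    mul_inv_cancel_right₀ (norm_ne_zero_iff.2 hϖ₀)]

end CongruenceSubgroups

section EdgeGroup

variable {F : Type*} [NormedField F] [IsUltrametricDist F] {ϖ : F} {k : ℕ}

lemma mul_mem_Ge (hϖ : ‖ϖ‖ ≤ 1) {g h : GL (Fin 2) F} (hg : g ∈ Ge F ϖ k)
    (hh : h ∈ Ge F ϖ k) : g * h ∈ Ge F ϖ k := by
  obtain ⟨ha, hb, hc, hd⟩ := hg
  obtain ⟨ha', hb', hc', hd'⟩ := hh
  have hr : ‖ϖ‖ ^ k ≤ 1 := pow_le_one₀ (norm_nonneg _) hϖ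
  have hs : ‖ϖ‖ ^ (k - 1) ≤ 1 := pow_le_one₀ (norm_nonneg _) hϖ
  set m := (g : Matrix (Fin 2) (Fin 2) F)
  set n := (h : Matrix (Fin 2) (Fin 2) F)
  have hA := norm_le_one_of_norm_sub_one_le_one (ha.trans hr)
  have hD := norm_le_one_of_norm_sub_one_le_one (hd.trans hr)
  have hA' := norm_le_one_of_norm_sub_one_le_one (ha'.trans hr)
  have hD' := norm_le_one_of_norm_sub_one_le_one (hd'.trans hr)
  simp only [Ge, Set.mem_ofPred_eq, Units.val_mul, Matrix.mul_apply, Fin.sum_univ_two]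
  refine ⟨?_, ?_, ?_, ?_⟩
  · rw [show m 0 0 * n 0 0 + m 0 1 * n 1 0 - 1 = (m 0 0 - 1) * n 0 0 + (n 0 0 - 1) + m 0 1 * n 1 0
      by ring]
    exact norm_add_le_of_le (norm_add_le_of_le (norm_mul_le_of_norm_le_one_right ha hA') ha')
      (norm_mul_le_of_norm_le_one_right hb (hc'.trans hs))
  · exact norm_add_le_of_le (norm_mul_le_of_norm_le_one_left hA hb')
      (norm_mul_le_of_norm_le_one_right hb hD')
  · exact norm_add_le_of_le (norm_mul_le_of_norm_le_one_right hc hA')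
      (norm_mul_le_of_norm_le_one_left hD hc')
  · rw [show m 1 0 * n 0 1 + m 1 1 * n 1 1 - 1 = m 1 0 * n 0 1 + (m 1 1 - 1) * n 1 1 + (n 1 1 - 1)
      by ring]
    exact norm_add_le_of_le (norm_add_le_of_le (norm_mul_le_of_norm_le_one_left (hc.trans hs) hb')
      (norm_mul_le_of_norm_le_one_right hd hD')) hd'

lemma inv_mem_Ge (hϖ : ‖ϖ‖ < 1) (hk : 1 ≤ k) {g : GL (Fin 2) F} (hg : g ∈ Ge F ϖ k) :
    g⁻¹ ∈ Ge F ϖ k := by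
  obtain ⟨ha, hb, hc, hd⟩ := hg
  have hr : ‖ϖ‖ ^ k < 1 := pow_lt_one₀ (norm_nonneg _) hϖ (by omega)
  have hs : ‖ϖ‖ ^ (k - 1) ≤ 1 := pow_le_one₀ (norm_nonneg _) hϖ.le
  set m := (g : Matrix (Fin 2) (Fin 2) F)
  have hA := norm_le_one_of_norm_sub_one_le_one (ha.trans hr.le)
  have hD := norm_le_one_of_norm_sub_one_le_one (hd.trans hr.le)
  have hdet : ‖m.det - 1‖ ≤ ‖ϖ‖ ^ k := by
    rw [Matrix.det_fin_two, show m 0 0 * m 1 1 - m 0 1 * m 1 0 - 1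
      = (m 0 0 - 1) * m 1 1 + (m 1 1 - 1) - m 0 1 * m 1 0 by ring]
    exact norm_sub_le_of_le (norm_add_le_of_le (norm_mul_le_of_norm_le_one_right ha hD) hd)
      (norm_mul_le_of_norm_le_one_right hb (hc.trans hs))
  have hdet1 : ‖m.det‖ = 1 := norm_eq_one_of_norm_sub_one_lt_one (hdet.trans_lt hr)
  have hdet0 : m.det ≠ 0 := norm_ne_zero_iff.1 (hdet1.trans_ne one_ne_zero)
  have hinv1 : ‖m.det⁻¹‖ = 1 := by rw [norm_inv, hdet1, inv_one]
  have hinv : ‖m.det⁻¹ - 1‖ ≤ ‖ϖ‖ ^ k := by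
    rw [show m.det⁻¹ - 1 = -(m.det - 1) * m.det⁻¹ by field_simp; ring, norm_mul, norm_neg,
      hinv1, mul_one]
    exact hdet
  have hcoe : ((g⁻¹ : GL (Fin 2) F) : Matrix (Fin 2) (Fin 2) F) =
      m.det⁻¹ • !![m 1 1, -m 0 1; -m 1 0, m 0 0] := by
    rw [Matrix.GeneralLinearGroup.coe_inv, Matrix.inv_def, Matrix.adjugate_fin_two,
      Ring.inverse_eq_inv']
  simp only [Ge, Set.mem_ofPred_eq, hcoe, Matrix.smul_apply, Matrix.of_apply, Matrix.cons_val',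
    Matrix.cons_val_zero, Matrix.cons_val_one, Matrix.empty_val', Matrix.cons_val_fin_one,
    smul_eq_mul, norm_mul, norm_neg, hinv1, one_mul]
  refine ⟨?_, hb, hc, ?_⟩
  · rw [show m.det⁻¹ * m 1 1 - 1 = (m.det⁻¹ - 1) * m 1 1 + (m 1 1 - 1) by ring]
    exact norm_add_le_of_le (norm_mul_le_of_norm_le_one_right hinv hD) hd
  · rw [show m.det⁻¹ * m 0 0 - 1 = (m.det⁻¹ - 1) * m 0 0 + (m 0 0 - 1) by ring]
    exact norm_add_le_of_le (norm_mul_le_of_norm_le_one_right hinv hA) ha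

def geSubgroup (hϖ : ‖ϖ‖ < 1) (hk : 1 ≤ k) : Subgroup (GL (Fin 2) F) where
  carrier := Ge F ϖ k
  one_mem' := one_mem_Ge
  mul_mem' := mul_mem_Ge hϖ.le
  inv_mem' := inv_mem_Ge hϖ hk

lemma closure_Gv0_union_Gv1_le (hϖ₀ : ϖ ≠ 0) (hϖ : ‖ϖ‖ < 1) (hk : 1 ≤ k) :
    Subgroup.closure (Gv0 F ϖ k ∪ Gv1 F ϖ hϖ₀ k) ≤ geSubgroup hϖ hk :=
  (Subgroup.closure_le _).2 (Set.union_subset (Gv0_subset_Ge hϖ.le) (Gv1_subset_Ge hϖ₀ hϖ.le hk))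

end EdgeGroup

section Mobius

variable {F : Type*} [Field F]

open scoped Classical in
def ofInvc (u : F) : Option F := if u = 0 then none else some u⁻¹

lemma moeb_one (z : Option F) : moeb F (1 : Matrix (Fin 2) (Fin 2) F) z = z := by
  cases z <;> simp [moeb]

lemma moeb_ofInvc (g : Matrix (Fin 2) (Fin 2) F) {u : F} (h : g 1 0 * u + g 0 0 ≠ 0) :
    moeb F g (ofInvc u) = ofInvc ((g 1 1 * u + g 0 1) / (g 1 0 * u + g 0 0)) := by
  by_cases hu : u = 0
  · subst hu
    by_cases hb : g 0 1 = 0 <;> simp_all [ofInvc, moeb]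
  · have hnum : g 0 0 * u⁻¹ + g 1 0 = (g 1 0 * u + g 0 0) * u⁻¹ := by
      field_simp; ring
    have hden : g 0 1 * u⁻¹ + g 1 1 = (g 1 1 * u + g 0 1) * u⁻¹ := by
      field_simp; ring
    have hcond : g 0 1 * u⁻¹ + g 1 1 = 0 ↔
        (g 1 1 * u + g 0 1) / (g 1 0 * u + g 0 0) = 0 := by
      simp [hden, hu, h]
    simp only [ofInvc, hu, if_false, moeb]
    by_cases hc : g 0 1 * u⁻¹ + g 1 1 = 0
    · rw [if_pos hc, if_pos (hcond.1 hc)]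
    · rw [if_neg hc, if_neg (mt hcond.2 hc), hnum, hden,
        mul_div_mul_right _ _ (inv_ne_zero hu), inv_div]

lemma moeb_upperUnipotent_ofInvc (t u : F) :
    moeb F (upperUnipotent t : Matrix (Fin 2) (Fin 2) F) (ofInvc u) = ofInvc (u + t) := by
  rw [moeb_ofInvc _ (by simp [coe_upperUnipotent])]
  simp [coe_upperUnipotent]

lemma moeb_lowerUnipotent_some (t w : F) :
    moeb F (lowerUnipotent t : Matrix (Fin 2) (Fin 2) F) (some w) = some (w + t) := by
  simp [moeb, coe_lowerUnipotent]

end Mobius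

section Orbits

variable {F : Type*} [NormedField F] {ϖ : F} {k : ℕ}

lemma orb_mono {S T : Set (GL (Fin 2) F)} (h : S ⊆ T) (z : Option F) : orb F S z ⊆ orb F T z :=
  fun _ ⟨g, hg, hgz⟩ ↦ ⟨g, h hg, hgz⟩

lemma mem_orb_self {S : Set (GL (Fin 2) F)} (h : 1 ∈ S) (z : Option F) : z ∈ orb F S z :=
  ⟨1, h, moeb_one z⟩

lemma one_mem_Gv1 (hϖ : ϖ ≠ 0) : (1 : GL (Fin 2) F) ∈ Gv1 F ϖ hϖ k :=
  ⟨1, by refine ⟨?_, ?_, ?_, ?_⟩ <;> simp, by simp⟩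

lemma regionInfty_subset_image_ofInvc (hϖ : ϖ ≠ 0) :
    regionInfty F ϖ ⊆ ofInvc '' Metric.closedBall 0 ‖ϖ‖ := by
  rintro _ (rfl | ⟨w, rfl, hw⟩)
  · exact ⟨0, by simp, by simp [ofInvc]⟩
  · have hw0 : w ≠ 0 := by
      rintro rfl
      simp [hϖ] at hw
    refine ⟨w⁻¹, ?_, by simp [ofInvc, hw0]⟩
    rw [mem_closedBall_zero_iff, norm_inv]
    exact inv_le_of_inv_le₀ (norm_pos_iff.2 hϖ) hw

lemma exists_eq_some_of_notMem_regionInfty (hϖ : IsUniformizer F ϖ) {z : Option F}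
    (hz : z ∉ regionInfty F ϖ) : ∃ w, z = some w ∧ ‖w‖ ≤ 1 := by
  obtain _ | w := z
  · exact absurd (Or.inl rfl) hz
  · refine ⟨w, rfl, ?_⟩
    have hϖ0 : 0 < ‖ϖ‖ := norm_pos_iff.2 hϖ.1
    have hw : ‖w‖ < ‖ϖ‖⁻¹ := lt_of_not_ge fun hw ↦ hz (Or.inr ⟨w, rfl, hw⟩)
    have hlt : ‖ϖ * w‖ < 1 := by
      rw [norm_mul, ← mul_inv_cancel₀ hϖ0.ne']
      exact mul_lt_mul_of_pos_left hw hϖ0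
    have hle := hϖ.2.2 _ hlt
    rw [norm_mul] at hle
    exact le_of_mul_le_mul_left (hle.trans_eq (mul_one _).symm) hϖ0

lemma image_ofInvc_closedBall_subset_orb_Gv0 (u₀ : F) :
    ofInvc '' Metric.closedBall u₀ (‖ϖ‖ ^ k) ⊆ orb F (Gv0 F ϖ k) (ofInvc u₀) := by
  rintro _ ⟨u, hu, rfl⟩
  refine ⟨upperUnipotent (u - u₀), upperUnipotent_mem_Gv0 (by rwa [← dist_eq_norm]), ?_⟩
  rw [moeb_upperUnipotent_ofInvc, add_sub_cancel]

variable [IsUltrametricDist F]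

lemma orb_Ge_ofInvc_subset (hϖ : ‖ϖ‖ < 1) (hk : 1 ≤ k) {u₀ : F} (hu₀ : ‖u₀‖ ≤ ‖ϖ‖) :
    orb F (Ge F ϖ k) (ofInvc u₀) ⊆ ofInvc '' Metric.closedBall u₀ (‖ϖ‖ ^ k) := by
  rintro _ ⟨g, ⟨ha, hb, hc, hd⟩, rfl⟩
  have hr : ‖ϖ‖ ^ k < 1 := pow_lt_one₀ (norm_nonneg _) hϖ (by omega)
  have hcu : ‖(g : Matrix (Fin 2) (Fin 2) F) 1 0 * u₀‖ ≤ ‖ϖ‖ ^ k :=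
    (norm_mul_le_of_le hc hu₀).trans_eq (pow_sub_one_mul (by omega) _)
  have hden := norm_mul_add_eq_one hr ha hcu
  rw [moeb_ofInvc _ (norm_ne_zero_iff.1 (hden.trans_ne one_ne_zero))]
  refine ⟨_, ?_, rfl⟩
  rw [Metric.mem_closedBall, dist_eq_norm]
  exact norm_mul_add_div_mul_add_sub_le hr ha hb hcu hd (hu₀.trans hϖ.le)

lemma orb_Gv0_some_subset (hϖ : ‖ϖ‖ < 1) (hk : 1 ≤ k) {w₀ : F} (hw₀ : ‖w₀‖ ≤ 1) :
    orb F (Gv0 F ϖ k) (some w₀) ⊆ some '' Metric.closedBall w₀ (‖ϖ‖ ^ k) := by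
  rintro _ ⟨g, ⟨ha, hb, hc, hd⟩, rfl⟩
  have hr : ‖ϖ‖ ^ k < 1 := pow_lt_one₀ (norm_nonneg _) hϖ (by omega)
  have hbw := norm_mul_le_of_norm_le_one_right hb hw₀
  have hden := norm_mul_add_eq_one hr hd hbw
  refine ⟨_, ?_, (if_neg (norm_ne_zero_iff.1 (hden.trans_ne one_ne_zero))).symm⟩
  rw [Metric.mem_closedBall, dist_eq_norm]
  exact norm_mul_add_div_mul_add_sub_le hr hd hc hbw ha hw₀

lemma mem_regionInfty_of_orb_Gv1_subset_orb_Gv0 (hϖ : IsUniformizer F ϖ) (hk : 1 ≤ k)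
    {z₀ z₁ : Option F} (hsub : orb F (Gv1 F ϖ hϖ.1 k) z₁ ⊆ orb F (Gv0 F ϖ k) z₀) :
    z₀ ∈ regionInfty F ϖ := by
  by_contra hz₀
  obtain ⟨w₀, rfl, hw₀⟩ := exists_eq_some_of_notMem_regionInfty hϖ hz₀
  have hball := orb_Gv0_some_subset hϖ.2.1 hk hw₀
  obtain ⟨w₁, hw₁, rfl⟩ := hball (hsub (mem_orb_self (one_mem_Gv1 hϖ.1) z₁))
  have hshift : some (w₁ + ϖ⁻¹ * ϖ ^ k) ∈ orb F (Gv1 F ϖ hϖ.1 k) (some w₁) := by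
    refine ⟨_, Set.mem_image_of_mem _ (lowerUnipotent_mem_Gv0 (norm_pow ϖ k).le), ?_⟩
    rw [dmat_mul_lowerUnipotent_mul_inv, moeb_lowerUnipotent_some]
  obtain ⟨w₂, hw₂, hw₂₁⟩ := hball (hsub hshift)
  rw [Metric.mem_closedBall, dist_eq_norm] at hw₁ hw₂
  have hle : ‖ϖ⁻¹ * ϖ ^ k‖ ≤ ‖ϖ‖ ^ k := by
    rw [show ϖ⁻¹ * ϖ ^ k = (w₂ - w₀) - (w₁ - w₀) by rw [Option.some.inj hw₂₁]; ring]
    exact IsUltrametricDist.norm_sub_le_of_le hw₂ hw₁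
  have hϖ0 : 0 < ‖ϖ‖ := norm_pos_iff.2 hϖ.1
  rw [norm_mul, norm_inv, norm_pow] at hle
  rw [inv_mul_le_iff₀ hϖ0, le_mul_iff_one_le_left (pow_pos hϖ0 k)] at hle
  exact hle.not_gt hϖ.2.1

end Orbits

theorem statement14_general (F : Type*) [NontriviallyNormedField F]
    [IsUltrametricDist F]
    (ϖ : F) (hϖ : IsUniformizer F ϖ) (k : ℕ) (hk : 1 ≤ k) :
    ∀ D D' : Set (Option F), IsOrbit F (Gv0 F ϖ k) D → IsOrbit F (Gv1 F ϖ hϖ.1 k) D' →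
      D' ⊆ D →
      IsOrbit F ((Subgroup.closure (Gv0 F ϖ k ∪ Gv1 F ϖ hϖ.1 k) :
        Subgroup (GL (Fin 2) F)) : Set (GL (Fin 2) F)) D := by
  rintro _ _ ⟨z₀, rfl⟩ ⟨z₁, rfl⟩ hsub
  obtain ⟨u₀, hu₀, rfl⟩ :=
    regionInfty_subset_image_ofInvc hϖ.1 (mem_regionInfty_of_orb_Gv1_subset_orb_Gv0 hϖ hk hsub)
  refine ⟨ofInvc u₀,
    (orb_mono (Subgroup.subset_closure.trans' Set.subset_union_left) _).antisymm ?_⟩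
  calc orb F _ (ofInvc u₀) ⊆ orb F (Ge F ϖ k) (ofInvc u₀) :=
        orb_mono (closure_Gv0_union_Gv1_le hϖ.1 hϖ.2.1 hk) _
    _ ⊆ ofInvc '' Metric.closedBall u₀ (‖ϖ‖ ^ k) :=
        orb_Ge_ofInvc_subset hϖ.2.1 hk (mem_closedBall_zero_iff.1 hu₀)
    _ ⊆ orb F (Gv0 F ϖ k) (ofInvc u₀) := image_ofInvc_closedBall_subset_orb_Gv0 u₀

theorem statement14 (p : ℕ) [Fact p.Prime] (F : Type*) [NontriviallyNormedField F]
    [IsUltrametricDist F] [NormedAlgebra ℚ_[p] F] [FiniteDimensional ℚ_[p] F]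
    (ϖ : F) (hϖ : IsUniformizer F ϖ) (k : ℕ) (hk : 1 ≤ k) :
    ∀ D D' : Set (Option F), IsOrbit F (Gv0 F ϖ k) D → IsOrbit F (Gv1 F ϖ hϖ.1 k) D' →
      D' ⊆ D →
      IsOrbit F ((Subgroup.closure (Gv0 F ϖ k ∪ Gv1 F ϖ hϖ.1 k) :
        Subgroup (GL (Fin 2) F)) : Set (GL (Fin 2) F)) D :=
  statement14_general F ϖ hϖ k hk
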